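/- In the equality case of Hoffman's ratio bound, the characteristic vector of the coclique Y lies in the sum of the span of the all-ones vector and the eigenspace of the smallest eigenvalue λ. -/

import Mathlib

/-!
Since `λ` is the least eigenvalue of the symmetric matrix `A`, the matrix `A - λ I` is positive
semidefinite, so any vector on which its quadratic form vanishes is a `λ`-eigenvector of `A`.
Take `f = χ_Y - a 𝟏` with `a = |Y| / v = λ / (λ - k)`. Regularity and `χ_Yᵀ A χ_Y = 0` give
`fᵀ A f = -a² k v` and `fᵀ f = a (1 - a) v`, hence `fᵀ (A - λ I) f = a v (a (λ - k) - λ) = 0`.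
-/

open Matrix

namespace Matrix

variable {n : Type*} [Fintype n]

theorem IsSymm.dotProduct_mulVec_comm {R : Type*} [CommSemiring R] {A : Matrix n n R}
    (hA : A.IsSymm) (v w : n → R) : v ⬝ᵥ (A *ᵥ w) = w ⬝ᵥ (A *ᵥ v) := by
  rw [dotProduct_mulVec, ← mulVec_transpose, hA.eq, dotProduct_comm]

theorem IsSymm.dotProduct_mulVec_sub_smul_one {R : Type*} [CommRing R] {A : Matrix n n R}
    (hA : A.IsSymm) {k : R} (hA1 : A *ᵥ 1 = k • 1) (x : n → R) (c : R) :
    (x - c • 1) ⬝ᵥ (A *ᵥ (x - c • 1))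
      = x ⬝ᵥ (A *ᵥ x) - 2 * c * k * ∑ i, x i + c ^ 2 * k * Fintype.card n := by
  have h1Ax : (1 : n → R) ⬝ᵥ (A *ᵥ x) = k * ∑ i, x i := by
    rw [hA.dotProduct_mulVec_comm, hA1, dotProduct_smul, dotProduct_one, smul_eq_mul]
  simp only [mulVec_sub, mulVec_smul, hA1, sub_dotProduct, dotProduct_sub, smul_dotProduct,
    dotProduct_smul, h1Ax, smul_eq_mul]
  rw [dotProduct_one, one_dotProduct_one]
  ring

variable [DecidableEq n]

theorem IsHermitian.posSemidef_sub_smul_one {A : Matrix n n ℝ} (hA : A.IsHermitian) {lam : ℝ}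
    (hlam : ∀ (μ : ℝ) (v : n → ℝ), v ≠ 0 → A *ᵥ v = μ • v → lam ≤ μ) :
    (A - lam • 1).PosSemidef := by
  have hB : (A - lam • 1).IsHermitian := hA.sub (by simp [IsHermitian])
  refine hB.posSemidef_iff_eigenvalues_nonneg.mpr fun i => ?_
  have hv : ⇑(hB.eigenvectorBasis i) ≠ 0 := fun h =>
    hB.eigenvectorBasis.orthonormal.ne_zero i (by ext x; exact congrFun h x)
  have hAv : A *ᵥ ⇑(hB.eigenvectorBasis i)
      = (hB.eigenvalues i + lam) • ⇑(hB.eigenvectorBasis i) := by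
    have := hB.mulVec_eigenvectorBasis i
    rw [sub_mulVec, smul_mulVec, one_mulVec, sub_eq_iff_eq_add] at this
    rw [this, add_smul]
  simpa using hlam _ _ hv hAv

theorem PosSemidef.mulVec_eq_smul_of_dotProduct_mulVec_eq {A : Matrix n n ℝ} {lam : ℝ}
    (hA : (A - lam • 1).PosSemidef) {v : n → ℝ} (hv : v ⬝ᵥ (A *ᵥ v) = lam * (v ⬝ᵥ v)) :
    A *ᵥ v = lam • v := by
  have h := (hA.dotProduct_mulVec_zero_iff v).mp (by
    simp [sub_mulVec, smul_mulVec, hv, dotProduct_smul])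
  rwa [sub_mulVec, smul_mulVec, one_mulVec, sub_eq_zero] at h

end Matrix

namespace SimpleGraph

variable {V : Type*} [Fintype V] {G : SimpleGraph V} [DecidableRel G.Adj]

theorem IsRegularOfDegree.adjMatrix_mulVec_one {R : Type*} [NonAssocSemiring R] {k : ℕ}
    (hreg : G.IsRegularOfDegree k) : G.adjMatrix R *ᵥ 1 = (k : R) • 1 :=
  funext fun _ => by simpa using adjMatrix_mulVec_const_apply_of_regular (a := (1 : R)) hreg

theorem dotProduct_adjMatrix_mulVec_boole_eq_zero {R : Type*} [NonAssocSemiring R]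
    [DecidableEq V] {Y : Finset V} (hY : ∀ x ∈ Y, ∀ y ∈ Y, ¬ G.Adj x y) :
    (fun x => if x ∈ Y then (1 : R) else 0) ⬝ᵥ
      (G.adjMatrix R *ᵥ fun x => if x ∈ Y then (1 : R) else 0) = 0 := by
  rw [dotProduct_mulVec_adjMatrix]
  refine Finset.sum_eq_zero fun x _ => Finset.sum_eq_zero fun y _ => ?_
  by_cases hx : x ∈ Y <;> by_cases hy : y ∈ Y <;> simp [hx, hy, hY]

end SimpleGraph

theorem stmt_5_general {V : Type*} [Fintype V] [DecidableEq V]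
    (G : SimpleGraph V) [DecidableRel G.Adj]
    (k : ℕ) (hreg : G.IsRegularOfDegree k) (lam : ℝ) (hneg : lam < 0)
    (hlam_min : ∀ (μ : ℝ) (v : V → ℝ), v ≠ 0 → (G.adjMatrix ℝ).mulVec v = μ • v → lam ≤ μ)
    (Y : Finset V) (hY : ∀ x ∈ Y, ∀ y ∈ Y, ¬ G.Adj x y)
    (heq : (Y.card : ℝ) = (Fintype.card V : ℝ) / (1 - (k : ℝ) / lam)) :
    ∃ a : ℝ,
      (G.adjMatrix ℝ).mulVec ((fun x => if x ∈ Y then (1 : ℝ) else 0) - a • (fun _ : V => (1 : ℝ)))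
        = lam • ((fun x => if x ∈ Y then (1 : ℝ) else 0) - a • (fun _ : V => (1 : ℝ))) := by
  set χ : V → ℝ := fun x => if x ∈ Y then 1 else 0
  set a : ℝ := (1 - (k : ℝ) / lam)⁻¹
  have hcard : (Y.card : ℝ) = a * Fintype.card V := heq.trans (div_eq_inv_mul _ _)
  have ha : a * (lam - k) = lam := by
    have : lam - k ≠ 0 := by linarith [(Nat.cast_nonneg k : (0 : ℝ) ≤ k)]
    simp only [a]
    field_simp [hneg.ne]
  clear_value a
  have hsum : ∑ x, χ x = Y.card := by simp [χ]
  have hχχ : χ ⬝ᵥ χ = Y.card := by simp [χ, dotProduct]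
  have hself := isSymm_one.dotProduct_mulVec_sub_smul_one (k := (1 : ℝ)) (by simp) χ a
  simp only [one_mulVec] at hself
  have hquad : (χ - a • 1) ⬝ᵥ (G.adjMatrix ℝ *ᵥ (χ - a • 1))
      = lam * ((χ - a • 1) ⬝ᵥ (χ - a • 1)) := by
    rw [G.isSymm_adjMatrix.dotProduct_mulVec_sub_smul_one hreg.adjMatrix_mulVec_one, hself,
      SimpleGraph.dotProduct_adjMatrix_mulVec_boole_eq_zero hY, hsum, hχχ]
    linear_combination (2 * lam * a - 2 * a * k - lam) * hcard + a * Fintype.card V * ha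
  exact ⟨a, ((G.isHermitian_adjMatrix ℝ).posSemidef_sub_smul_one hlam_min
    |>.mulVec_eq_smul_of_dotProduct_mulVec_eq hquad)⟩

/-- Equality case of Hoffman's ratio bound: the characteristic vector of the coclique lies
in the span of the all-ones vector plus the eigenspace of the smallest eigenvalue. -/
theorem stmt_5 {V : Type*} [Fintype V] [DecidableEq V]
    (G : SimpleGraph V) [DecidableRel G.Adj]
    (k : ℕ) (hreg : G.IsRegularOfDegree k) (lam : ℝ) (hneg : lam < 0)
    (hlam_eig : ∃ v : V → ℝ, v ≠ 0 ∧ (G.adjMatrix ℝ).mulVec v = lam • v)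
    (hlam_min : ∀ (μ : ℝ) (v : V → ℝ), v ≠ 0 → (G.adjMatrix ℝ).mulVec v = μ • v → lam ≤ μ)
    (Y : Finset V) (hY : ∀ x ∈ Y, ∀ y ∈ Y, ¬ G.Adj x y)
    (heq : (Y.card : ℝ) = (Fintype.card V : ℝ) / (1 - (k : ℝ) / lam)) :
    ∃ a : ℝ,
      (G.adjMatrix ℝ).mulVec ((fun x => if x ∈ Y then (1 : ℝ) else 0) - a • (fun _ : V => (1 : ℝ)))
        = lam • ((fun x => if x ∈ Y then (1 : ℝ) else 0) - a • (fun _ : V => (1 : ℝ))) :=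
  stmt_5_general G k hreg lam hneg hlam_min Y hY heq
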